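/- arXiv:1912.07203 — 3 statements merged into one kernel-verified Lean document; each statement's English description precedes it below -/
import Mathlib

section
/- Let G be a connected simple graph on n ≥ 333 vertices and let 0 < p ≤ 1. Let 𝒞 be a random subset of V(G) in which each vertex is included independently with probability p. Then with probability at least 0.9 the following holds: for every subset A ⊆ V(G) and every natural number i such that |B(A,i)| ≥ |A|·(log n)²/p, we have |B(A,i) ∩ 𝒞| ≥ |A|. -/
/-!
If the random set `𝒞` meets `B = B(A,i)` in fewer than `|A|` points, it avoids `B \ T` for some
`T ⊆ B` with `|T| < |A|`; for each such `T` this has probability `(1-p)^{|B|-|T|}`, which is at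
most `exp(|A| - |A| (log n)²)` when `|B| ≥ |A| (log n)² / p`. As `G` is connected, radii `i ≤ n`
give all balls, so a union bound over `A`, `i` and `T` pays at most `(n+1) |A| n^{2|A|}` for sets
of size `|A|`, and `exp(-|A| (log n)²)` beats this as soon as `log n ≥ 8`.
-/

open MeasureTheory
open scoped ENNReal

def graphBall {V : Type*} (G : SimpleGraph V) (A : Set V) (i : ℕ) : Set V :=
  {v | ∃ a ∈ A, G.dist a v ≤ i}

open Finset Real

noncomputable def bernoulliSubset (V : Type*) [Fintype V] (p : ℝ) (hp : p ≤ 1) :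
    Measure (V → Bool) :=
  Measure.pi fun _ : V => (PMF.bernoulli p.toNNReal (Real.toNNReal_le_one.mpr hp)).toMeasure

namespace bernoulliSubset

variable {V : Type*} [Fintype V] {p : ℝ} (hp : p ≤ 1)

instance : IsProbabilityMeasure (bernoulliSubset V p hp) := by
  unfold bernoulliSubset
  infer_instance

lemma apply_forall_eq_false (hp0 : 0 ≤ p) (S : Finset V) :
    bernoulliSubset V p hp {f | ∀ v ∈ S, f v = false} = ENNReal.ofReal ((1 - p) ^ #S) := by
  classical
  have hbox : {f : V → Bool | ∀ v ∈ S, f v = false} =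
      Set.univ.pi fun v => if v ∈ S then {false} else Set.univ := by
    ext f
    simp only [Set.mem_ofPred_eq, Set.mem_pi, Set.mem_univ, true_implies]
    exact forall_congr' fun v => by split_ifs with hv <;> simp [hv]
  have hfalse : (PMF.bernoulli p.toNNReal (Real.toNNReal_le_one.mpr hp)).toMeasure {false}
      = ENNReal.ofReal (1 - p) := by
    rw [PMF.toMeasure_apply_singleton _ _ (measurableSet_singleton _), PMF.bernoulli_apply,
      cond_false, ENNReal.ofReal_sub _ hp0, ENNReal.ofReal_one]
    rfl
  rw [bernoulliSubset, hbox, Measure.pi_pi]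
  simp only [apply_ite, hfalse, measure_univ, prod_ite_mem, univ_inter, prod_const,
    ENNReal.ofReal_pow (sub_nonneg.2 hp)]

lemma apply_ncard_inter_lt_le (hp0 : 0 ≤ p) (B : Set V) (a : ℕ) :
    bernoulliSubset V p hp {f | (B ∩ {v | f v = true}).ncard < a} ≤
      ENNReal.ofReal (∑ j ∈ range a, B.ncard.choose j * (1 - p) ^ (B.ncard - j)) := by
  classical
  obtain ⟨B, rfl⟩ := B.toFinite.exists_finset_coe
  have hcover : {f : V → Bool | ((B : Set V) ∩ {v | f v = true}).ncard < a} ⊆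
      ⋃ j ∈ range a, ⋃ T ∈ B.powersetCard j, {f | ∀ v ∈ B \ T, f v = false} := by
    intro f hf
    have hf : #(B.filter (f · = true)) < a := by
      rwa [← Set.ncard_coe_finset, coe_filter]
    simp only [Set.mem_iUnion, mem_range, mem_powersetCard, exists_prop]
    refine ⟨_, hf, _, ⟨filter_subset _ _, rfl⟩, fun v hv => ?_⟩
    obtain ⟨hvB, hvT⟩ := mem_sdiff.1 hv
    simpa [hvB] using hvT
  calc _ ≤ _ := measure_mono hcover
    _ ≤ ∑ j ∈ range a, ∑ T ∈ B.powersetCard j,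
          bernoulliSubset V p hp {f | ∀ v ∈ B \ T, f v = false} :=
        (measure_biUnion_finset_le _ _).trans (sum_le_sum fun j _ => measure_biUnion_finset_le _ _)
    _ = ∑ j ∈ range a, ∑ T ∈ B.powersetCard j, ENNReal.ofReal ((1 - p) ^ (#B - j)) := by
        refine sum_congr rfl fun j _ => sum_congr rfl fun T hT => ?_
        rw [apply_forall_eq_false hp hp0, card_sdiff_of_subset (mem_powersetCard.1 hT).1,
          (mem_powersetCard.1 hT).2]
    _ = _ := by
        rw [Set.ncard_coe_finset, ENNReal.ofReal_sum_of_nonneg fun j _ => by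
          have := sub_nonneg.2 hp; positivity]
        simp only [sum_const, card_powersetCard, nsmul_eq_mul,
          ENNReal.ofReal_mul (Nat.cast_nonneg _), ENNReal.ofReal_natCast]

end bernoulliSubset

lemma sum_range_choose_mul_one_sub_pow_le {a b : ℕ} {p t : ℝ} (hp : p ≤ 1) (ht : 1 ≤ t)
    (h : a * t ≤ p * b) :
    ∑ j ∈ range a, b.choose j * (1 - p) ^ (b - j) ≤ a * b ^ a * exp (a - a * t) := by
  have hab : (a : ℝ) ≤ b := by
    nlinarith [(a.cast_nonneg : (0 : ℝ) ≤ a), (b.cast_nonneg : (0 : ℝ) ≤ b)]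
  calc _ ≤ ∑ _j ∈ range a, (b : ℝ) ^ a * exp (a - a * t) := sum_le_sum fun j hj => ?_
    _ = _ := by rw [sum_const, card_range, nsmul_eq_mul, mul_assoc]
  have hja : j < a := mem_range.1 hj
  have hjb : j < b := by
    have : a ≤ b := by exact_mod_cast hab
    omega
  have hchoose : (b.choose j : ℝ) ≤ (b : ℝ) ^ a := by
    exact_mod_cast (Nat.choose_le_pow b j).trans (Nat.pow_le_pow_right (by omega) hja.le)
  have hpow : (1 - p) ^ (b - j) ≤ exp (a - a * t) :=
    calc (1 - p) ^ (b - j) ≤ exp (-p) ^ (b - j) :=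
          pow_le_pow_left₀ (sub_nonneg.2 hp) (one_sub_le_exp_neg p) _
      _ = exp (-p * b + p * j) := by
          rw [← exp_nat_mul, Nat.cast_sub hjb.le]
          ring_nf
      _ ≤ exp (a - a * t) := by
          gcongr
          nlinarith [(Nat.cast_lt (α := ℝ)).2 hja, (j.cast_nonneg : (0 : ℝ) ≤ j)]
  exact mul_le_mul hchoose hpow (by have := sub_nonneg.2 hp; positivity) (by positivity)

section Graph

variable {V : Type*} [Fintype V] (G : SimpleGraph V)

lemma graphBall_min_card (hG : G.Connected) (A : Set V) (i : ℕ) :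
    graphBall G A (min i (Fintype.card V)) = graphBall G A i := by
  ext v
  refine ⟨fun ⟨a, ha, hd⟩ => ⟨a, ha, hd.trans (min_le_left _ _)⟩, fun ⟨a, ha, hd⟩ => ⟨a, ha, ?_⟩⟩
  obtain ⟨q, hq, hlen⟩ := hG.exists_path_of_dist a v
  exact le_min hd (hlen ▸ hq.length_lt.le)

def ballMissEvent (θ : ℝ) (A : Finset V) (i : ℕ) : Set (V → Bool) :=
  {f | (#A : ℝ) * θ ≤ (graphBall G A i).ncard ∧ (graphBall G A i ∩ {v | f v = true}).ncard < #A}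

lemma compl_setOf_forall_le_ncard_subset (hG : G.Connected) (θ : ℝ) :
    {f : V → Bool | ∀ (A : Set V) (i : ℕ), (A.ncard : ℝ) * θ ≤ (graphBall G A i).ncard →
        (A.ncard : ℝ) ≤ ((graphBall G A i ∩ {v | f v = true}).ncard : ℝ)}ᶜ ⊆
      ⋃ A : Finset V, ⋃ i ∈ range (Fintype.card V + 1), ballMissEvent G θ A i := by
  intro f hf
  simp only [Set.mem_compl_iff, Set.mem_ofPred_eq, not_forall, not_le, exists_prop] at hf
  obtain ⟨A, i, hθ, hmiss⟩ := hf
  obtain ⟨A, rfl⟩ := A.toFinite.exists_finset_coe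
  simp only [Set.mem_iUnion, mem_range, exists_prop]
  refine ⟨A, min i (Fintype.card V), Nat.lt_succ_of_le (min_le_right _ _), ?_⟩
  rw [ballMissEvent, graphBall_min_card G hG, Set.mem_ofPred_eq, ← Set.ncard_coe_finset]
  exact ⟨hθ, by exact_mod_cast hmiss⟩

end Graph

lemma eight_le_logb_two {x : ℝ} (hx : 256 ≤ x) : 8 ≤ logb 2 x := by
  rw [le_logb_iff_rpow_le (by norm_num) (by linarith)]
  norm_num [hx]

lemma forty_mul_pow_mul_exp_le {x : ℝ} (hx : 8 ≤ logb 2 x) (hx0 : 0 < x) {k : ℕ} (hk : 1 ≤ k) :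
    40 * x ^ (2 * k + 2) * exp (2 * k) ≤ exp (k * logb 2 x ^ 2) := by
  have hlog : log x = logb 2 x * log 2 := by
    rw [logb, div_mul_cancel₀ _ (log_pos one_lt_two).ne']
  have h40 : log 40 ≤ 6 * log 2 := by
    rw [← log_rpow two_pos]
    exact log_le_log (by norm_num) (by norm_num)
  have hk_real : (1 : ℝ) ≤ k := by exact_mod_cast hk
  rw [← exp_log (by positivity : 0 < 40 * x ^ (2 * k + 2) * exp (2 * k)), exp_le_exp,
    log_mul (by positivity) (by positivity), log_mul (by positivity) (by positivity), log_pow,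
    log_exp, hlog]
  push_cast
  nlinarith [log_two_lt_d9, log_two_gt_d9, mul_le_mul_of_nonneg_left hx (by linarith : (0:ℝ) ≤ k),
    mul_nonneg (sub_nonneg.2 hk_real) (sub_nonneg.2 hx)]

/-- On `n` vertices, bounds the probability that a ball of at least `k * t / p` vertices around a
`k`-set contains fewer than `k` points of the random set. -/
noncomputable def missBound (n k : ℕ) (t : ℝ) : ℝ := k * n ^ k * exp (k - k * t)

lemma missBound_nonneg (n k : ℕ) (t : ℝ) : 0 ≤ missBound n k t := by
  unfold missBound
  positivity

lemma choose_mul_missBound_le {n : ℕ} (hn : 256 ≤ n) (k : ℕ) :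
    n.choose k * missBound n k (logb 2 n ^ 2) ≤ 1 / (10 * (n + 1) ^ 2) := by
  unfold missBound
  rcases Nat.eq_zero_or_pos k with rfl | hk
  · simp only [CharP.cast_eq_zero, zero_mul, mul_zero]
    positivity
  have hx : (256 : ℝ) ≤ n := by exact_mod_cast hn
  have hchoose : (n.choose k : ℝ) ≤ (n : ℝ) ^ k := by exact_mod_cast Nat.choose_le_pow n k
  have hk_exp : (k : ℝ) ≤ exp k := by linarith [add_one_le_exp (k : ℝ)]
  have hsq : ((n : ℝ) + 1) ^ 2 ≤ 4 * (n : ℝ) ^ 2 := by nlinarith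
  have key := forty_mul_pow_mul_exp_le (eight_le_logb_two hx) (by linarith) hk
  rw [le_div_iff₀ (by positivity), exp_sub]
  calc _ ≤ (n : ℝ) ^ k * (exp k * n ^ k * (exp k / exp (k * logb 2 n ^ 2))) *
        (10 * (4 * n ^ 2)) := by
        gcongr
    _ = 40 * (n : ℝ) ^ (2 * k + 2) * exp (2 * k) / exp (k * logb 2 n ^ 2) := by
        rw [show (2 : ℝ) * k = k + k by ring, exp_add]
        ring
    _ ≤ 1 := (div_le_one (exp_pos _)).2 key

lemma sum_sum_missBound_le {V : Type*} [Fintype V] (hV : 256 ≤ Fintype.card V) :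
    ∑ A : Finset V, ∑ _i ∈ range (Fintype.card V + 1),
      missBound (Fintype.card V) #A (logb 2 (Fintype.card V) ^ 2) ≤ 0.1 := by
  set n := Fintype.card V
  calc _ = (n + 1 : ℝ) * ∑ k ∈ range (n + 1), n.choose k * missBound n k (logb 2 n ^ 2) := by
        simp only [sum_const, card_range, nsmul_eq_mul, ← mul_sum]
        rw [← powerset_univ, sum_powerset_apply_card fun k => missBound n k (logb 2 n ^ 2)]
        simp only [card_univ, nsmul_eq_mul]
        push_cast
        rfl
    _ ≤ (n + 1 : ℝ) * ∑ _k ∈ range (n + 1), 1 / (10 * ((n : ℝ) + 1) ^ 2) := by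
        gcongr with k
        exact choose_mul_missBound_le hV k
    _ = 0.1 := by
        rw [sum_const, card_range, nsmul_eq_mul]
        push_cast
        field_simp
        norm_num

lemma bernoulliSubset_ballMissEvent_le {V : Type*} [Fintype V] (G : SimpleGraph V) {p t : ℝ}
    (hp0 : 0 < p) (hp : p ≤ 1) (ht : 1 ≤ t) (A : Finset V) (i : ℕ) :
    bernoulliSubset V p hp (ballMissEvent G (t / p) A i) ≤
      ENNReal.ofReal (missBound (Fintype.card V) #A t) := by
  by_cases hθ : (#A : ℝ) * (t / p) ≤ (graphBall G A i).ncard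
  · rw [← mul_div_assoc, div_le_iff₀ hp0, mul_comm _ p] at hθ
    have hcard : (graphBall G A i).ncard ≤ Fintype.card V :=
      Nat.card_eq_fintype_card (α := V) ▸ Set.ncard_le_card _
    calc _ ≤ bernoulliSubset V p hp {f | (graphBall G A i ∩ {v | f v = true}).ncard < #A} :=
          measure_mono fun f hf => hf.2
      _ ≤ _ := bernoulliSubset.apply_ncard_inter_lt_le hp hp0.le _ _
      _ ≤ _ := by
          refine ENNReal.ofReal_le_ofReal ((sum_range_choose_mul_one_sub_pow_le hp ht hθ).trans ?_)
          unfold missBound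
          gcongr
  · calc _ ≤ bernoulliSubset V p hp ∅ := measure_mono fun f hf => absurd hf.1 hθ
      _ ≤ _ := by simp

lemma ofReal_one_sub_le_of_measure_compl_le {Ω : Type*} [MeasurableSpace Ω] {μ : Measure Ω}
    [IsProbabilityMeasure μ] {s : Set Ω} (hs : MeasurableSet s) {ε : ℝ} (hε : 0 ≤ ε)
    (h : μ sᶜ ≤ ENNReal.ofReal ε) : ENNReal.ofReal (1 - ε) ≤ μ s := by
  rw [← compl_compl s, prob_compl_eq_one_sub hs.compl, ENNReal.ofReal_sub _ hε, ENNReal.ofReal_one]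
  exact tsub_le_tsub_left h 1

/-- Lemma 2.1: Let `G` be a connected graph on `n ≥ 333` vertices and `0 < p ≤ 1`.
If `𝒞` is a random subset of `V(G)` in which every vertex is included independently
with probability `p`, then with probability at least `0.9`, for every `A ⊆ V(G)` and
every `i : ℕ` with `|B(A,i)| ≥ |A| (log₂ n)² / p`, we have `|B(A,i) ∩ 𝒞| ≥ |A|`. -/
theorem random_set_hits_balls
    {V : Type} [Fintype V] (G : SimpleGraph V) (hG : G.Connected)
    (n : ℕ) (hn : Fintype.card V = n) (hn333 : 333 ≤ n)
    (p : ℝ) (hp0 : 0 < p) (hp1 : p ≤ 1) :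
    ENNReal.ofReal 0.9 ≤
      (Measure.pi fun _ : V =>
          (PMF.bernoulli (Real.toNNReal p) (Real.toNNReal_le_one.mpr hp1)).toMeasure)
        {f : V → Bool |
          ∀ (A : Set V) (i : ℕ),
            (A.ncard : ℝ) * (Real.logb 2 n) ^ 2 / p ≤ ((graphBall G A i).ncard : ℝ) →
            (A.ncard : ℝ) ≤ (((graphBall G A i) ∩ {v | f v = true}).ncard : ℝ)} := by
  subst hn
  have hV : 256 ≤ Fintype.card V := by omega
  have hL : 1 ≤ logb 2 (Fintype.card V) ^ 2 := by
    nlinarith [eight_le_logb_two (x := Fintype.card V) (by exact_mod_cast hV)]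
  change _ ≤ bernoulliSubset V p hp1 _
  simp only [mul_div_assoc]
  refine (ofReal_one_sub_le_of_measure_compl_le (ε := 0.1) (Set.to_countable _).measurableSet
    (by norm_num) ?_).trans' (by norm_num)
  calc _ ≤ _ := measure_mono (compl_setOf_forall_le_ncard_subset G hG _)
    _ ≤ ∑ A : Finset V, ∑ i ∈ range (Fintype.card V + 1),
          bernoulliSubset V p hp1 (ballMissEvent G (logb 2 (Fintype.card V) ^ 2 / p) A i) :=
        (measure_iUnion_fintype_le _ _).trans (sum_le_sum fun A _ => measure_biUnion_finset_le _ _)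
    _ ≤ ∑ A : Finset V, ∑ _i ∈ range (Fintype.card V + 1),
          ENNReal.ofReal (missBound (Fintype.card V) #A (logb 2 (Fintype.card V) ^ 2)) := by
        gcongr with A _ i _
        exact bernoulliSubset_ballMissEvent_le G hp0 hp1 hL A i
    _ ≤ ENNReal.ofReal 0.1 := by
        simp only [← ENNReal.ofReal_sum_of_nonneg fun _ _ => missBound_nonneg _ _ _,
          ← ENNReal.ofReal_sum_of_nonneg fun _ _ => sum_nonneg fun _ _ => missBound_nonneg _ _ _]
        exact ENNReal.ofReal_le_ofReal (sum_sum_missBound_le hV)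
end

section
/- Let G be a finite connected simple graph of girth g ≥ 3 and let ρ = ⌊(g+1)/4⌋. Let u be a vertex of G. In the game of Cops and Robbers on G, two cops both starting at u have a strategy with the following property: against any robber whose starting vertex lies outside B(u, 2ρ−2), if the robber is never caught then the robber's position never lies in B(u, ρ). -/
/-!
For a robber at distance `d` from `u`, its shadow is the vertex at distance `2ρ - d` from `u`
on a fixed geodesic from `u` to the robber. The cops keep one of them on the shadow and the other
at `u` (both at `u` while `d ≥ 2ρ`). Since `4ρ ≤ g + 1`, geodesics from `u` to two adjacent
vertices below the level `2ρ - 1` cannot close a cycle, so one extends the other and the shadow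
moves by at most one step whenever the robber does; at the top level the shadow is a neighbour
of `u`, and the cop at `u` takes over. A robber entering `B(u, ρ)` would be its own shadow,
hence caught.
-/

namespace SimpleGraph

variable {V : Type*} {G : SimpleGraph V}

theorem Walk.IsPath.eq_of_length_add_length_lt_egirth {u v : V} {p q : G.Walk u v}
    (hp : p.IsPath) (hq : q.IsPath) (hlt : ((p.length + q.length : ℕ) : ℕ∞) < G.egirth) :
    p = q := by
  by_contra hne
  obtain ⟨_, _, p', q', hp', hq', hcycle⟩ := hp.exists_isCycle_of_ne hq hne
  have hle : (p'.append q'.reverse).length ≤ p.length + q.length := by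
    simpa using add_le_add (length_le_of_isSubwalk hp') (length_le_of_isSubwalk hq')
  exact (egirth_le_length hcycle).not_gt (lt_of_le_of_lt (by exact_mod_cast hle) hlt)

theorem Walk.dist_getVert_le {u v : V} (p : G.Walk u v) (k : ℕ) : G.dist u (p.getVert k) ≤ k :=
  (dist_le (p.take k)).trans (by simp [Walk.take_length])

theorem Walk.dist_getVert_getVert_succ_le_one {u v : V} (p : G.Walk u v) (k : ℕ) :
    G.dist (p.getVert k) (p.getVert (k + 1)) ≤ 1 := by
  rcases lt_or_ge k p.length with hk | hk
  · exact (dist_eq_one_iff_adj.2 (p.adj_getVert_succ hk)).le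
  · simp [p.getVert_of_length_le hk, p.getVert_of_length_le (hk.trans k.le_succ)]

theorem Walk.eq_concat_of_length_eq_dist {u r r' : V} {p : G.Walk u r} {q : G.Walk u r'}
    (hp : p.length = G.dist u r) (hq : q.length = G.dist u r') (hadj : G.Adj r r')
    (hle : G.dist u r ≤ G.dist u r')
    (hlt : ((G.dist u r + G.dist u r' + 1 : ℕ) : ℕ∞) < G.egirth) :
    q = p.concat hadj := by
  classical
  have hr' : r' ∉ p.support := fun hmem => by
    have := (dist_le (p.takeUntil r' hmem)).trans_lt (length_takeUntil_lt_length hmem hadj.ne')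
    omega
  refine (isPath_of_length_eq_dist q hq).eq_of_length_add_length_lt_egirth
    ((isPath_of_length_eq_dist p hp).concat hr' hadj) ?_
  convert hlt using 2
  rw [length_concat, hp, hq]
  omega

namespace Connected

noncomputable def geodesic (hG : G.Connected) (u v : V) : G.Walk u v :=
  (hG.exists_walk_length_eq_dist u v).choose

theorem length_geodesic (hG : G.Connected) (u v : V) : (hG.geodesic u v).length = G.dist u v :=
  (hG.exists_walk_length_eq_dist u v).choose_spec

theorem getVert_geodesic_of_adj (hG : G.Connected) {u r r' : V} (hadj : G.Adj r r')
    (hle : G.dist u r ≤ G.dist u r')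
    (hlt : ((G.dist u r + G.dist u r' + 1 : ℕ) : ℕ∞) < G.egirth) {k : ℕ}
    (hk : k ≤ G.dist u r) :
    G.dist u r' = G.dist u r + 1 ∧
      (hG.geodesic u r').getVert k = (hG.geodesic u r).getVert k := by
  have heq := Walk.eq_concat_of_length_eq_dist (hG.length_geodesic u r)
    (hG.length_geodesic u r') hadj hle hlt
  refine ⟨?_, ?_⟩
  · rw [← hG.length_geodesic, heq, Walk.length_concat, hG.length_geodesic]
  · rw [heq, Walk.concat_eq_append, Walk.getVert_append', if_pos (by rwa [hG.length_geodesic])]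

end Connected

end SimpleGraph

namespace CopsAndRobbers

open SimpleGraph

variable {V : Type*} {G : SimpleGraph V}

section Moves

variable (G)

def IsMove {ι : Type*} (s s' : ι → V) : Prop := ∀ i, s' i = s i ∨ G.Adj (s i) (s' i)

noncomputable def stepTo (a b : V) : V := if G.dist a b ≤ 1 then b else a

noncomputable def chase (u x : V) (s : Fin 2 → V) : Fin 2 → V :=
  if G.dist (s 0) x ≤ 1 then ![stepTo G (s 0) x, stepTo G (s 1) u]
  else ![stepTo G (s 0) u, stepTo G (s 1) x]

open scoped Classical in
/-- The cop away from `u` gets priority, so that the cop on the target keeps following it. -/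
noncomputable def guardMove (u x : V) (s : Fin 2 → V) : Fin 2 → V :=
  if s 0 = u then chase G u x (s ∘ Equiv.swap 0 1) ∘ Equiv.swap 0 1 else chase G u x s

def Guards (u a : V) (s : Fin 2 → V) : Prop := s = ![a, u] ∨ s = ![u, a]

end Moves

theorem IsMove.comp {ι κ : Type*} {s s' : ι → V} (h : IsMove G s s') (σ : κ → ι) :
    IsMove G (s ∘ σ) (s' ∘ σ) :=
  fun i => h (σ i)

theorem stepTo_of_dist_le_one {a b : V} (h : G.dist a b ≤ 1) : stepTo G a b = b := if_pos h

theorem stepTo_self (a : V) : stepTo G a a = a := by simp [stepTo]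

theorem stepTo_eq_or_adj (hG : G.Connected) (a b : V) :
    stepTo G a b = a ∨ G.Adj a (stepTo G a b) := by
  unfold stepTo
  split_ifs with h
  · rcases Nat.le_one_iff_eq_zero_or_eq_one.1 h with h0 | h1
    · exact .inl (hG.dist_eq_zero_iff.1 h0).symm
    · exact .inr (dist_eq_one_iff_adj.1 h1)
  · exact .inl rfl

theorem isMove_chase (hG : G.Connected) (u x : V) (s : Fin 2 → V) :
    IsMove G s (chase G u x s) := by
  intro i
  unfold chase
  split_ifs <;> fin_cases i <;> exact stepTo_eq_or_adj hG _ _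

theorem isMove_guardMove (hG : G.Connected) (u x : V) (s : Fin 2 → V) :
    IsMove G s (guardMove G u x s) := by
  unfold guardMove
  split_ifs
  · simpa [Function.comp_def] using
      (isMove_chase hG u x (s ∘ Equiv.swap 0 1)).comp (Equiv.swap 0 1)
  · exact isMove_chase hG u x s

theorem vec_comp_swap (b c : V) : ![b, c] ∘ Equiv.swap (0 : Fin 2) 1 = ![c, b] := by
  ext i; fin_cases i <;> rfl

theorem Guards.comp_swap {u a : V} {s : Fin 2 → V} (h : Guards u a s) :
    Guards u a (s ∘ Equiv.swap 0 1) := by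
  rcases h with rfl | rfl
  · exact .inr (vec_comp_swap a u)
  · exact .inl (vec_comp_swap u a)

theorem chase_of_dist_le_one {u x : V} {s : Fin 2 → V} (h : G.dist (s 0) x ≤ 1) :
    chase G u x s = ![stepTo G (s 0) x, stepTo G (s 1) u] := if_pos h

theorem chase_of_not_dist_le_one {u x : V} {s : Fin 2 → V} (h : ¬G.dist (s 0) x ≤ 1) :
    chase G u x s = ![stepTo G (s 0) u, stepTo G (s 1) x] := if_neg h

theorem guardMove_of_eq {u x : V} {s : Fin 2 → V} (h : s 0 = u) :
    guardMove G u x s = chase G u x (s ∘ Equiv.swap 0 1) ∘ Equiv.swap 0 1 := if_pos h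

theorem guardMove_of_ne {u x : V} {s : Fin 2 → V} (h : s 0 ≠ u) :
    guardMove G u x s = chase G u x s := if_neg h

theorem guards_chase {u a x : V}
    (hclose : G.dist a x ≤ 1 ∨ (G.dist u x ≤ 1 ∧ G.dist a u ≤ 1)) :
    Guards u x (chase G u x ![a, u]) := by
  by_cases h : G.dist a x ≤ 1
  · rw [chase_of_dist_le_one (s := ![a, u]) h]
    exact .inl (by simp [stepTo_of_dist_le_one h, stepTo_self])
  · obtain ⟨hux, hau⟩ := hclose.resolve_left h
    rw [chase_of_not_dist_le_one (s := ![a, u]) h]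
    exact .inr (by simp [stepTo_of_dist_le_one hux, stepTo_of_dist_le_one hau])

theorem guards_guardMove {u a x : V} {s : Fin 2 → V} (hs : Guards u a s)
    (hclose : G.dist a x ≤ 1 ∨ (G.dist u x ≤ 1 ∧ G.dist a u ≤ 1)) :
    Guards u x (guardMove G u x s) := by
  rcases hs with rfl | rfl
  · by_cases hau : a = u
    · subst hau
      rw [guardMove_of_eq (u := a) (s := ![a, a]) rfl, vec_comp_swap]
      exact (guards_chase hclose).comp_swap
    · rw [guardMove_of_ne hau]
      exact guards_chase hclose
  · rw [guardMove_of_eq (u := u) (s := ![u, a]) rfl, vec_comp_swap]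
    exact (guards_chase hclose).comp_swap

theorem guards_const (u : V) : Guards u u (fun _ => u) :=
  .inl (by ext i; fin_cases i <;> rfl)

section Shadow

variable (hG : G.Connected) (u : V) (ρ : ℕ)

/-- By truncated subtraction this is `u` once `d(u, r) ≥ 2ρ`, and since `getVert` stops at the
endpoint it is `r` itself once `d(u, r) ≤ ρ`. -/
noncomputable def shadow (r : V) : V := (hG.geodesic u r).getVert (2 * ρ - G.dist u r)

theorem shadow_eq_self_of_dist_le {r : V} (h : G.dist u r ≤ ρ) : shadow hG u ρ r = r :=
  (hG.geodesic u r).getVert_of_length_le (by rw [hG.length_geodesic]; omega)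

theorem dist_shadow_le (r : V) : G.dist u (shadow hG u ρ r) ≤ 2 * ρ - G.dist u r :=
  Walk.dist_getVert_le _ _

noncomputable def guardStrategy (hist : List ((Fin 2 → V) × V)) : Fin 2 → V :=
  hist.foldl (fun s p => guardMove G u (shadow hG u ρ p.2) s) (fun _ => u)

variable {hG u ρ}

theorem dist_shadow_shadow_le_one_of_adj {r r' : V} (hadj : G.Adj r r')
    (hle : G.dist u r ≤ G.dist u r')
    (hlt : ((G.dist u r + G.dist u r' + 1 : ℕ) : ℕ∞) < G.egirth) (hρ : ρ ≤ G.dist u r) :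
    G.dist (shadow hG u ρ r) (shadow hG u ρ r') ≤ 1 := by
  obtain ⟨hd, hk⟩ :=
    hG.getVert_geodesic_of_adj hadj hle hlt (k := 2 * ρ - G.dist u r) (by omega)
  unfold shadow
  rw [← hk]
  rcases (by omega : 2 * ρ - G.dist u r = 2 * ρ - G.dist u r' + 1 ∨
      2 * ρ - G.dist u r = 2 * ρ - G.dist u r') with h | h
  · rw [h, dist_comm]
    exact Walk.dist_getVert_getVert_succ_le_one _ _
  · rw [h, dist_self]
    exact zero_le_one

/-- Away from the top level `d(u, r) ≥ 2ρ - 1`, the geodesics to `r` and `r'` are too short to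
close a cycle, so one extends the other and the shadow moves by at most one step. -/
theorem shadow_close {g : ℕ} (hgirth : (g : ℕ∞) ≤ G.egirth) (hρg : 4 * ρ ≤ g + 1) {r r' : V}
    (hr : ρ < G.dist u r) (hmove : r' = r ∨ G.Adj r r') :
    G.dist (shadow hG u ρ r) (shadow hG u ρ r') ≤ 1 ∨
      (G.dist u (shadow hG u ρ r') ≤ 1 ∧ G.dist (shadow hG u ρ r) u ≤ 1) := by
  rcases hmove with rfl | hadj
  · exact .inl (by simp)
  by_cases htop : 2 * ρ ≤ G.dist u r + 1 ∧ 2 * ρ ≤ G.dist u r' + 1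
  · refine .inr ⟨(dist_shadow_le hG u ρ r').trans (by omega), ?_⟩
    rw [dist_comm]
    exact (dist_shadow_le hG u ρ r).trans (by omega)
  have hdiff := hadj.diff_dist_adj (u := u)
  have hlt : ((G.dist u r + G.dist u r' + 1 : ℕ) : ℕ∞) < G.egirth :=
    lt_of_lt_of_le (by exact_mod_cast (by omega : G.dist u r + G.dist u r' + 1 < g)) hgirth
  refine .inl ?_
  rcases le_total (G.dist u r) (G.dist u r') with hle | hle
  · exact dist_shadow_shadow_le_one_of_adj hadj hle hlt hr.le
  · rw [dist_comm]
    refine dist_shadow_shadow_le_one_of_adj hadj.symm hle (by rwa [add_comm (G.dist u r')]) ?_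
    omega

theorem guards_shadow_guardMove {g : ℕ} (hgirth : (g : ℕ∞) ≤ G.egirth) (hρg : 4 * ρ ≤ g + 1)
    {r r' : V} {s : Fin 2 → V} (hr : ρ < G.dist u r) (hs : Guards u (shadow hG u ρ r) s)
    (hmove : r' = r ∨ G.Adj r r') :
    Guards u (shadow hG u ρ r') (guardMove G u (shadow hG u ρ r') s) :=
  guards_guardMove hs (shadow_close hgirth hρg hr hmove)

theorem lt_dist_of_guards_shadow {r : V} {s : Fin 2 → V} (hs : Guards u (shadow hG u ρ r) s)
    (hfree : ∀ i, s i ≠ r) : ρ < G.dist u r := by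
  by_contra! h
  rw [shadow_eq_self_of_dist_le hG u ρ h] at hs
  rcases hs with rfl | rfl
  · exact hfree 0 rfl
  · exact hfree 1 rfl

end Shadow

theorem eq_foldl_ofFn_step {α β γ : Type*} (f : β → α → β) (c : ℕ → β) (h : ℕ → γ) (r : ℕ → α)
    (hc : ∀ t, c (t + 1) = (List.ofFn fun j : Fin (t + 1) => (h j, r j)).foldl
      (fun s p => f s p.2) (c 0)) (t : ℕ) :
    c (t + 1) = f (c t) (r t) := by
  rw [hc, List.ofFn_succ', List.concat_eq_append, List.foldl_concat]
  congr 1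
  cases t with
  | zero => rfl
  | succ t => exact (hc t).symm

end CopsAndRobbers

open CopsAndRobbers

theorem two_cops_guard_ball_general
    {V : Type} (G : SimpleGraph V) (hG : G.Connected)
    (g : ℕ) (hgirth : G.egirth = (g : ℕ∞))
    (ρ : ℕ) (hρ : ρ = (g + 1) / 4) (u : V) :
    ∃ move : List ((Fin 2 → V) × V) → Fin 2 → V,
      ∀ r : ℕ → V,
        (∀ t, r (t + 1) = r t ∨ G.Adj (r t) (r (t + 1))) →
        2 * ρ - 2 < G.dist u (r 0) →
        ∀ c : ℕ → Fin 2 → V,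
          c 0 = (fun _ => u) →
          (∀ t, c (t + 1) = move (List.ofFn fun j : Fin (t + 1) => (c j.val, r j.val))) →
          (∀ t i, c (t + 1) i = c t i ∨ G.Adj (c t i) (c (t + 1) i)) ∧
          ((∀ t i, c (t + 1) i ≠ r t) → ∀ t, ρ < G.dist u (r t)) := by
  have hρg : 4 * ρ ≤ g + 1 := by omega
  refine ⟨guardStrategy hG u ρ, ?_⟩
  intro r hr hr0 c hc0 hc
  have hstep : ∀ t, c (t + 1) = guardMove G u (shadow hG u ρ (r t)) (c t) :=
    eq_foldl_ofFn_step (fun s r => guardMove G u (shadow hG u ρ r) s) c c r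
      (fun t => by rw [hc t, hc0]; rfl)
  refine ⟨fun t => by rw [hstep t]; exact isMove_guardMove hG _ _ _, fun hfree => ?_⟩
  have hguard : ∀ t, ρ < G.dist u (r t) ∧ Guards u (shadow hG u ρ (r t)) (c (t + 1)) := by
    intro t
    induction t with
    | zero =>
      have hs : Guards u (shadow hG u ρ (r 0)) (c 1) := by
        rw [hstep, hc0]
        exact guards_guardMove (guards_const u)
          (.inl ((dist_shadow_le hG u ρ _).trans (by omega)))
      exact ⟨lt_dist_of_guards_shadow hs (hfree 0), hs⟩
    | succ t ih =>
      have hs := hstep (t + 1) ▸ guards_shadow_guardMove hgirth.ge hρg ih.1 ih.2 (hr t)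
      exact ⟨lt_dist_of_guards_shadow hs (hfree (t + 1)), hs⟩
  exact fun t => (hguard t).1

/-- Lemma 6.1: Let `G` be a connected graph of girth `g ≥ 3`, let `ρ = ⌊(g+1)/4⌋` and
let `u` be a vertex of `G`.  Two cops, both starting at `u`, have a strategy (a
function `move` from full histories of the play to the cops' next positions) such
that against any robber starting outside `B(u, 2ρ-2)`, the cops always move legally
and, as long as the robber is never caught, the robber's position never lies in
`B(u, ρ)`.  The robber is modelled by an arbitrary sequence `r : ℕ → V` in which each
step either stays put or moves along an edge; the robber is caught at time `t` if
some cop stands on `r t` right after the cops' `(t+1)`-st move. -/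
theorem two_cops_guard_ball
    {V : Type} [Fintype V] (G : SimpleGraph V) (hG : G.Connected)
    (g : ℕ) (hg : 3 ≤ g) (hgirth : G.egirth = (g : ℕ∞))
    (ρ : ℕ) (hρ : ρ = (g + 1) / 4) (u : V) :
    ∃ move : List ((Fin 2 → V) × V) → Fin 2 → V,
      ∀ r : ℕ → V,
        (∀ t, r (t + 1) = r t ∨ G.Adj (r t) (r (t + 1))) →
        2 * ρ - 2 < G.dist u (r 0) →
        ∀ c : ℕ → Fin 2 → V,
          c 0 = (fun _ => u) →
          (∀ t, c (t + 1) = move (List.ofFn fun j : Fin (t + 1) => (c j.val, r j.val))) →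
          (∀ t i, c (t + 1) i = c t i ∨ G.Adj (c t i) (c (t + 1) i)) ∧
          ((∀ t i, c (t + 1) i ≠ r t) → ∀ t, ρ < G.dist u (r t)) :=
  two_cops_guard_ball_general G hG g hgirth ρ hρ u
end

section
/- Let D be a finite strongly connected digraph on n vertices that either has diameter at most 2 or is bipartite with diameter at most 3. Then c(D) ≤ √(2n). -/
/-- `dirCopsCanWin D S H k` says that `k` cops have a winning strategy in the game of
Cops and Robbers in which the cops move along the arcs of a digraph with adjacency
relation `D` while the robber must start on a vertex of the subdigraph with vertex set
`S` and move only along its arcs `H`.  A cop strategy consists of initial positions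
`init` together with a function `move` from full histories of the play (the list of
pairs (cop positions, robber position) at times `0, …, t`) to the cops' next
positions.  The robber is an arbitrary sequence `r : ℕ → V` starting in `S` in which
each step either stays put or follows an arc of `H`; the strategy is winning if along
every such play the cops' moves are legal (each cop stays put or follows an arc of
`D`) and at some point, right after the cops' move, some cop stands on the robber's
current vertex. -/
def dirCopsCanWin {V : Type*} (D : V → V → Prop) (S : Set V) (H : V → V → Prop)
    (k : ℕ) : Prop :=
  ∃ (init : Fin k → V) (move : List ((Fin k → V) × V) → Fin k → V),
    ∀ r : ℕ → V,
      r 0 ∈ S →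
      (∀ t, r (t + 1) = r t ∨ H (r t) (r (t + 1))) →
      ∀ c : ℕ → Fin k → V,
        c 0 = init →
        (∀ t, c (t + 1) = move (List.ofFn fun j : Fin (t + 1) => (c j.val, r j.val))) →
        (∀ t i, c (t + 1) i = c t i ∨ D (c t i) (c (t + 1) i)) ∧
        ∃ t i, c (t + 1) i = r t

/-- `dirCopNumber D S H` is the cop number `c(D,H)` of the restricted game: the least
number of cops moving on `D` that can catch a robber confined to the subdigraph of
`D` with vertex set `S` and arc relation `H`. -/
noncomputable def dirCopNumber {V : Type*} (D : V → V → Prop) (S : Set V)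
    (H : V → V → Prop) : ℕ :=
  sInf {k | dirCopsCanWin D S H k}

/-- A digraph with adjacency relation `D` is strongly connected if every vertex can
reach every other vertex by a directed path. -/
def dirStronglyConnected {V : Type*} (D : V → V → Prop) : Prop :=
  ∀ u v : V, Relation.ReflTransGen D u v

/-- A digraph has diameter at most 2 if for every ordered pair of vertices there is a
directed path of length at most 2 from the first to the second. -/
def dirDiamLE2 {V : Type*} (D : V → V → Prop) : Prop :=
  ∀ u v : V, u = v ∨ D u v ∨ ∃ w, D u w ∧ D w v

/-- A digraph has diameter at most 3 if for every ordered pair of vertices there is a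
directed path of length at most 3 from the first to the second. -/
def dirDiamLE3 {V : Type*} (D : V → V → Prop) : Prop :=
  ∀ u v : V, u = v ∨ D u v ∨ (∃ w, D u w ∧ D w v) ∨ ∃ w x, D u w ∧ D w x ∧ D x v

/-- A digraph is bipartite if its underlying graph is bipartite, i.e. its vertices can
be two-coloured so that every arc joins vertices of different colours. -/
def dirBipartite {V : Type*} (D : V → V → Prop) : Prop :=
  ∃ f : V → Bool, ∀ u v : V, D u v → f u ≠ f v

/-!
All cops start at one vertex `v₀`. In stage `j` (rounds `3j`, `3j + 1`, `3j + 2`) cop `j`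
walks to the robber and then sits on the vertex it reached for ever, so that the robber can
never again enter that vertex's closed out-neighbourhood. Every vertex is within three moves
of `v₀`; in the bipartite case a robber on the side of `v₀` is within two, and after one move
the cop is next to it, which forces the robber to step to a vertex again within two moves of
the cop.

Stage `j` is a capture stage if the part of the new closed neighbourhood that is not yet
guarded has at most `k - j` vertices. Then the `k - j - 1` cops still waiting at `v₀` reach
all of it except the guarded vertex within two moves, since each out-neighbour of a robber
position that cop `j` can guard is within two moves of `v₀`: the robber is trapped and
caught. Otherwise the stage guards at least `k - j + 1` new vertices, and as
`∑_{j < k} (k - j + 1) = (k² + 3k) / 2 > n` for `k = ⌊√(2n)⌋`, one of the first `k` stages is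
a capture stage.
-/

open Relation

section Game

variable {V : Type*} {D : V → V → Prop} {S : Set V} {H : V → V → Prop}

theorem dirCopNumber_le {k : ℕ} (h : dirCopsCanWin D S H k) : dirCopNumber D S H ≤ k :=
  Nat.sInf_le h

theorem dirCopsCanWin_zero_of_isEmpty [IsEmpty V] : dirCopsCanWin D S H 0 :=
  ⟨isEmptyElim, fun _ => isEmptyElim, fun r => isEmptyElim (r 0)⟩

def pursuit (step : (ℕ → V) → ℕ → V → V) (v₀ : V) (r : ℕ → V) : ℕ → V
  | 0 => v₀
  | t + 1 => step r t (pursuit step v₀ r t)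

/-- Cops may follow move rules that see the whole robber walk, as long as the rule for
round `t` only looks at the robber's positions up to time `t`; a cop that gets within reach
of the robber captures it. -/
theorem dirCopsCanWin_of_causal {k : ℕ} (v₀ : V)
    (step : Fin k → (ℕ → V) → ℕ → V → V)
    (legal : ∀ i r t a, ReflGen D a (step i r t a))
    (causal : ∀ i t r₁ r₂, (∀ s ≤ t, r₁ s = r₂ s) → step i r₁ t = step i r₂ t)
    (catches : ∀ r : ℕ → V, r 0 ∈ S → (∀ t, r (t + 1) = r t ∨ H (r t) (r (t + 1))) →
      ∃ t i, ReflGen D (pursuit (step i) v₀ r t) (r t)) :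
    dirCopsCanWin D S H k := by
  classical
  let entry (hist : List ((Fin k → V) × V)) (s : ℕ) := hist.getD s (fun _ => v₀, v₀)
  refine ⟨fun _ => v₀, fun hist i =>
    let here := entry hist (hist.length - 1)
    if ReflGen D (here.1 i) here.2 then here.2
    else step i (fun s => (entry hist s).2) (hist.length - 1) (here.1 i), ?_⟩
  intro r hr0 hr c hc0 hc
  have hentry : ∀ t s, s ≤ t →
      entry (List.ofFn fun j : Fin (t + 1) => (c j, r j)) s = (c s, r s) := by
    intro t s hs
    simp only [entry, List.getD_eq_getElem?_getD, List.getElem?_ofFn,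
      dif_pos (Nat.lt_succ_of_le hs), Option.getD_some]
  have hmove : ∀ t i, c (t + 1) i =
      if ReflGen D (c t i) (r t) then r t else step i r t (c t i) := by
    intro t i
    rw [hc t]
    simp only [List.length_ofFn, Nat.add_sub_cancel, hentry t t le_rfl]
    rw [causal i t _ r fun s hs => by rw [hentry t s hs]]
  refine ⟨fun t i => ?_, ?_⟩
  · rw [← reflGen_iff, hmove t i]
    split_ifs with h
    · exact h
    · exact legal i r t (c t i)
  · by_contra! hfree
    have hout : ∀ t i, ¬ ReflGen D (c t i) (r t) := fun t i h =>
      hfree t i (by rw [hmove t i, if_pos h])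
    have hpursuit : ∀ t i, c t i = pursuit (step i) v₀ r t := by
      intro t
      induction t with
      | zero => intro i; rw [hc0]; rfl
      | succ t ih => intro i; rw [hmove t i, if_neg (hout t i), ih i]; rfl
    obtain ⟨t, i, hcatch⟩ := catches r hr0 hr
    exact hout t i (hpursuit t i ▸ hcatch)

end Game

theorem Bool.eq_of_ne_of_ne {a b c : Bool} (hab : a ≠ b) (hbc : b ≠ c) : a = c := by
  revert a b c
  decide

namespace DirCops

section Reach

variable {V : Type*} (D : V → V → Prop)

def ReachWithin : ℕ → V → V → Prop
  | 0, a, b => a = b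
  | n + 1, a, b => ∃ x, ReflGen D a x ∧ ReachWithin n x b

open Classical in
noncomputable def hop (n : ℕ) (a b : V) : V :=
  if h : ReachWithin D (n + 1) a b then h.choose else a

/-- The order `(b, T)` tells a cop to be at `b` at time `T`. -/
noncomputable def obey (o : Option (V × ℕ)) (t : ℕ) (a : V) : V :=
  match o with
  | none => a
  | some (b, T) => hop D (T - (t + 1)) a b

variable {D}

theorem ReachWithin.refl : ∀ (n : ℕ) (a : V), ReachWithin D n a a
  | 0, _ => rfl
  | n + 1, a => ⟨a, .refl, ReachWithin.refl n a⟩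

theorem ReachWithin.succ : ∀ {n : ℕ} {a b : V}, ReachWithin D n a b → ReachWithin D (n + 1) a b
  | 0, a, _, rfl => ⟨a, .refl, rfl⟩
  | _ + 1, _, _, ⟨x, hax, hxb⟩ => ⟨x, hax, hxb.succ⟩

theorem ReachWithin.mono {m n : ℕ} {a b : V} (hmn : m ≤ n) (h : ReachWithin D m a b) :
    ReachWithin D n a b := by
  induction hmn with
  | refl => exact h
  | step _ ih => exact ih.succ

theorem reachWithin_one {a b : V} : ReachWithin D 1 a b ↔ ReflGen D a b :=
  ⟨fun ⟨_, hax, hxb⟩ => hxb ▸ hax, fun h => ⟨b, h, rfl⟩⟩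

theorem ReachWithin.reflGen {n : ℕ} {a b : V} (h : ReachWithin D n a b) (hn : n ≤ 1) :
    ReflGen D a b :=
  reachWithin_one.mp (h.mono hn)

theorem reachWithin_two_of_dirDiamLE2 (h : dirDiamLE2 D) (a b : V) : ReachWithin D 2 a b := by
  rcases h a b with rfl | hab | ⟨x, hax, hxb⟩
  · exact .refl _ a
  · exact ⟨b, .single hab, b, .refl, rfl⟩
  · exact ⟨x, .single hax, b, .single hxb, rfl⟩

theorem reachWithin_three_of_dirDiamLE3 (h : dirDiamLE3 D) (a b : V) : ReachWithin D 3 a b := by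
  rcases h a b with rfl | hab | ⟨x, hax, hxb⟩ | ⟨x, y, hax, hxy, hyb⟩
  · exact .refl _ a
  · exact ⟨b, .single hab, b, .refl, b, .refl, rfl⟩
  · exact ⟨x, .single hax, b, .single hxb, b, .refl, rfl⟩
  · exact ⟨x, .single hax, y, .single hxy, b, .single hyb, rfl⟩

theorem reachWithin_two_of_bipartite {f : V → Bool} (hf : ∀ u v, D u v → f u ≠ f v)
    (h : dirDiamLE3 D) {a b : V} (hab : f a = f b) : ReachWithin D 2 a b := by
  rcases h a b with rfl | hab' | ⟨x, hax, hxb⟩ | ⟨x, y, hax, hxy, hyb⟩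
  · exact .refl _ a
  · exact absurd hab (hf a b hab')
  · exact ⟨x, .single hax, b, .single hxb, rfl⟩
  · exact (hf y b hyb ((Bool.eq_of_ne_of_ne (hf a x hax) (hf x y hxy)).symm.trans hab)).elim

theorem reflGen_hop (n : ℕ) (a b : V) : ReflGen D a (hop D n a b) := by
  unfold hop
  split_ifs with h
  · exact h.choose_spec.1
  · exact .refl

theorem reachWithin_hop {n : ℕ} {a b : V} (h : ReachWithin D (n + 1) a b) :
    ReachWithin D n (hop D n a b) b := by
  rw [hop, dif_pos h]
  exact h.choose_spec.2

theorem obey_some (b : V) (T t : ℕ) (a : V) :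
    obey D (some (b, T)) t a = hop D (T - (t + 1)) a b :=
  rfl

theorem reflGen_obey (o : Option (V × ℕ)) (t : ℕ) (a : V) : ReflGen D a (obey D o t a) := by
  rcases o with _ | ⟨b, T⟩
  · exact .refl
  · exact reflGen_hop _ a b

theorem reachWithin_of_obey {p : ℕ → V} {b : V} {T t₀ : ℕ}
    (hp : ∀ t ≥ t₀, p (t + 1) = obey D (some (b, T)) t (p t))
    (h₀ : ReachWithin D (T - t₀) (p t₀) b) : ∀ t ≥ t₀, ReachWithin D (T - t) (p t) b := by
  intro t ht
  induction t, ht using Nat.le_induction with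
  | base => exact h₀
  | succ t ht ih =>
    rw [hp t ht]
    exact reachWithin_hop (ih.mono (by omega))

end Reach

/-- What the cops waiting at `v₀` need to reach in time. -/
structure Routes {V : Type*} (D : V → V → Prop) (near : V → Prop) (v₀ : V) : Prop where
  reach_far : ∀ v, ¬ near v → ReachWithin D 3 v₀ v
  reach_far_out : ∀ v u, ¬ near v → D v u → ReachWithin D 2 v₀ u
  reach_near : ∀ v, near v → ReachWithin D 2 v₀ v
  reach_near_mid : ∀ v x u, near v → D v₀ x → D v u → ReachWithin D 2 x u
  reach_near_out : ∀ v u w, near v → D v u → D u w → ReachWithin D 2 v₀ w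

theorem Routes.of_dirDiamLE2 {V : Type*} {D : V → V → Prop} (h : dirDiamLE2 D) (v₀ : V) :
    Routes D (fun _ => False) v₀ where
  reach_far v _ := (reachWithin_two_of_dirDiamLE2 h v₀ v).succ
  reach_far_out _ u _ _ := reachWithin_two_of_dirDiamLE2 h v₀ u
  reach_near _ := False.elim
  reach_near_mid _ _ _ := False.elim
  reach_near_out _ _ _ := False.elim

theorem Routes.of_bipartite {V : Type*} {D : V → V → Prop} {f : V → Bool}
    (hf : ∀ u v, D u v → f u ≠ f v) (h : dirDiamLE3 D) (v₀ : V) :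
    Routes D (fun v => f v = f v₀) v₀ where
  reach_far v _ := reachWithin_three_of_dirDiamLE3 h v₀ v
  reach_far_out v u hv hvu :=
    reachWithin_two_of_bipartite hf h (Bool.eq_of_ne_of_ne (Ne.symm hv) (hf v u hvu))
  reach_near _ hv := reachWithin_two_of_bipartite hf h hv.symm
  reach_near_mid v x u hv hx hvu :=
    reachWithin_two_of_bipartite hf h (Bool.eq_of_ne_of_ne (hf v₀ x hx).symm (hv ▸ hf v u hvu))
  reach_near_out v u w hv hvu huw :=
    reachWithin_two_of_bipartite hf h (hv ▸ Bool.eq_of_ne_of_ne (hf v u hvu) (hf u w huw))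
section Strategy

open Finset Classical

variable {V : Type*} (D : V → V → Prop) (near : V → Prop) (k : ℕ) (v₀ : V) (r : ℕ → V)

/-- Stage `j` starts at time `3 * j`; cop `j` arrives at `guardVertex near r j` by time
`3 * j + 3`. A near robber is guarded where it is forced to move to. -/
noncomputable def revealTime (j : ℕ) : ℕ := if near (r (3 * j)) then 3 * j + 1 else 3 * j

noncomputable def guardVertex (j : ℕ) : V := r (revealTime near r j)

noncomputable def actorOrder (i t : ℕ) : Option (V × ℕ) :=
  if t < 3 * i then none
  else if near (r (3 * i)) ∧ t = 3 * i then some (r (3 * i), 3 * i + 2)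
  else some (guardVertex near r i, 3 * i + 3)

variable {near r} in
theorem le_revealTime (j : ℕ) : 3 * j ≤ revealTime near r j := by
  unfold revealTime; split_ifs <;> omega

variable {near r} in
theorem revealTime_le (j : ℕ) : revealTime near r j ≤ 3 * j + 1 := by
  unfold revealTime; split_ifs <;> omega

variable [Fintype V]

noncomputable def closedNbhd (v : V) : Finset V := {u | ReflGen D v u}

noncomputable def guardedSet (j : ℕ) : Finset V :=
  (range j).biUnion fun i => closedNbhd D (guardVertex near r i)

noncomputable def frontier (j : ℕ) : Finset V :=
  closedNbhd D (guardVertex near r j) \ guardedSet D near r j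

/-- The frontier can be covered by cop `j` and the waiting cops `j + 1, …, k - 1`. -/
def IsCaptureStage (j : ℕ) : Prop := #(frontier D near r j) + j ≤ k

noncomputable def firstCapture : ℕ := sInf {j | IsCaptureStage D near k r j}

/-- From the moment the guard vertex of the first capture stage `J` is known, the waiting
cops `i > J` are sent to the other vertices of its frontier. -/
def InSquad (i t : ℕ) : Prop :=
  IsCaptureStage D near k r (firstCapture D near k r) ∧ firstCapture D near k r < i ∧
    revealTime near r (firstCapture D near k r) ≤ t

noncomputable def squadTarget (i : ℕ) : Option V :=
  ((frontier D near r (firstCapture D near k r)).erase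
    (guardVertex near r (firstCapture D near k r))).toList[i - firstCapture D near k r - 1]?

noncomputable def order (i t : ℕ) : Option (V × ℕ) :=
  if InSquad D near k r i t then
    (squadTarget D near k r i).map fun b => (b, revealTime near r (firstCapture D near k r) + 2)
  else actorOrder near r i t

noncomputable def copPos (i : ℕ) : ℕ → V :=
  pursuit (fun r t => obey D (order D near k r i t) t) v₀ r

variable {D near k v₀ r}

theorem mem_closedNbhd {v u : V} : u ∈ closedNbhd D v ↔ ReflGen D v u := by
  simp [closedNbhd]

theorem card_guardedSet_succ (j : ℕ) :
    #(guardedSet D near r (j + 1)) = #(frontier D near r j) + #(guardedSet D near r j) := by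
  rw [frontier, card_sdiff_add_card, guardedSet, guardedSet, range_add_one, biUnion_insert]

theorem card_guardedSet_of_forall_not_isCaptureStage {n : ℕ}
    (h : ∀ j < n, ¬ IsCaptureStage D near k r j) :
    2 * k * n + 3 * n ≤ 2 * #(guardedSet D near r n) + n * n := by
  induction n with
  | zero => simp
  | succ n ih =>
    have hn : k < #(frontier D near r n) + n := not_le.mp (h n n.lt_succ_self)
    have := ih fun j hj => h j (by omega)
    rw [card_guardedSet_succ]
    nlinarith

theorem IsCaptureStage.firstCapture {j : ℕ} (h : IsCaptureStage D near k r j) :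
    IsCaptureStage D near k r (firstCapture D near k r) :=
  Nat.sInf_mem (s := {j | IsCaptureStage D near k r j}) ⟨j, h⟩

theorem firstCapture_le {j : ℕ} (h : IsCaptureStage D near k r j) :
    firstCapture D near k r ≤ j :=
  Nat.sInf_le h

theorem not_isCaptureStage_of_lt_firstCapture {j : ℕ} (h : j < firstCapture D near k r) :
    ¬ IsCaptureStage D near k r j :=
  Nat.notMem_of_lt_sInf (s := {j | IsCaptureStage D near k r j}) h

theorem exists_isCaptureStage (hk : 2 * Fintype.card V < k * k + 3 * k) :
    ∃ j < k, IsCaptureStage D near k r j := by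
  by_contra! h
  have := card_guardedSet_of_forall_not_isCaptureStage h
  have := card_le_univ (guardedSet D near r k)
  nlinarith

end Strategy

section Causality

open Finset Classical

variable {V : Type*} {D : V → V → Prop} {near : V → Prop} {k : ℕ} {r₁ r₂ : ℕ → V} {t : ℕ}

theorem revealTime_congr (h : ∀ s ≤ t, r₁ s = r₂ s) {j : ℕ} (hj : 3 * j ≤ t) :
    revealTime near r₁ j = revealTime near r₂ j := by
  rw [revealTime, revealTime, h _ hj]

theorem guardVertex_congr (h : ∀ s ≤ t, r₁ s = r₂ s) {j : ℕ} (hj : revealTime near r₁ j ≤ t) :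
    guardVertex near r₁ j = guardVertex near r₂ j := by
  rw [guardVertex, guardVertex, ← revealTime_congr h ((le_revealTime j).trans hj), h _ hj]

theorem actorOrder_congr (h : ∀ s ≤ t, r₁ s = r₂ s) (i : ℕ) :
    actorOrder near r₁ i t = actorOrder near r₂ i t := by
  by_cases ht : t < 3 * i
  · simp only [actorOrder, if_pos ht]
  have h3 : r₁ (3 * i) = r₂ (3 * i) := h _ (by omega)
  by_cases hn : near (r₁ (3 * i)) ∧ t = 3 * i
  · simp only [actorOrder, if_neg ht, if_pos (h3 ▸ hn), h3]
  · have hrev : revealTime near r₁ i ≤ t := by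
      unfold revealTime
      split_ifs with hn'
      · have : t ≠ 3 * i := fun e => hn ⟨hn', e⟩
        omega
      · omega
    simp only [actorOrder, if_neg ht, if_neg hn, if_neg (h3 ▸ hn), guardVertex_congr h hrev]

variable [Fintype V]

theorem guardedSet_congr (h : ∀ s ≤ t, r₁ s = r₂ s) {j : ℕ} (hj : 3 * j ≤ t) :
    guardedSet D near r₁ j = guardedSet D near r₂ j :=
  biUnion_congr rfl fun i hi => by
    have := revealTime_le (near := near) (r := r₁) i
    rw [guardVertex_congr h (by rw [mem_range] at hi; omega)]

theorem frontier_congr (h : ∀ s ≤ t, r₁ s = r₂ s) {j : ℕ} (hj : revealTime near r₁ j ≤ t) :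
    frontier D near r₁ j = frontier D near r₂ j := by
  rw [frontier, frontier, guardVertex_congr h hj,
    guardedSet_congr h ((le_revealTime j).trans hj)]

theorem isCaptureStage_congr (h : ∀ s ≤ t, r₁ s = r₂ s) {j : ℕ}
    (hj : revealTime near r₁ j ≤ t) :
    IsCaptureStage D near k r₁ j ↔ IsCaptureStage D near k r₂ j := by
  rw [IsCaptureStage, IsCaptureStage, frontier_congr h hj]

theorem InSquad.congr (h : ∀ s ≤ t, r₁ s = r₂ s) {i : ℕ} (hsq : InSquad D near k r₁ i t) :
    InSquad D near k r₂ i t ∧ firstCapture D near k r₂ = firstCapture D near k r₁ := by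
  obtain ⟨hcap, hi, hrev⟩ := hsq
  set J := firstCapture D near k r₁
  have hJ : IsCaptureStage D near k r₂ J := (isCaptureStage_congr h hrev).mp hcap
  have hbefore : ∀ j < J, ¬ IsCaptureStage D near k r₂ j := fun j hj hcap₂ => by
    have := revealTime_le (near := near) (r := r₁) j
    have := le_revealTime (near := near) (r := r₁) J
    exact not_isCaptureStage_of_lt_firstCapture hj ((isCaptureStage_congr h (by omega)).mpr hcap₂)
  have hfirst : firstCapture D near k r₂ = J :=
    le_antisymm (firstCapture_le hJ) (not_lt.mp fun hlt => hbefore _ hlt hJ.firstCapture)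
  refine ⟨⟨hfirst ▸ hJ, hfirst ▸ hi, ?_⟩, hfirst⟩
  rwa [hfirst, ← revealTime_congr h ((le_revealTime J).trans hrev)]

theorem order_congr (h : ∀ s ≤ t, r₁ s = r₂ s) (i : ℕ) :
    order D near k r₁ i t = order D near k r₂ i t := by
  by_cases hsq : InSquad D near k r₁ i t
  · obtain ⟨hsq₂, hJ⟩ := hsq.congr h
    have hrev := hsq.2.2
    rw [order, order, if_pos hsq, if_pos hsq₂, squadTarget, squadTarget, hJ,
      frontier_congr h hrev, guardVertex_congr h hrev,
      revealTime_congr h ((le_revealTime _).trans hrev)]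
  · have hsq₂ : ¬ InSquad D near k r₂ i t := fun hsq₂ =>
      hsq (hsq₂.congr fun s hs => (h s hs).symm).1
    rw [order, order, if_neg hsq, if_neg hsq₂, actorOrder_congr h]

end Causality

section Capture

open Finset Classical

variable {V : Type*} [Fintype V] {D : V → V → Prop} {near : V → Prop} {k : ℕ} {v₀ : V}
  {r : ℕ → V}

theorem copPos_succ (i t : ℕ) :
    copPos D near k v₀ r i (t + 1) =
      obey D (order D near k r i t) t (copPos D near k v₀ r i t) :=
  rfl

theorem order_of_le_firstCapture {J i t : ℕ} (hJ : firstCapture D near k r = J) (hi : i ≤ J) :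
    order D near k r i t = actorOrder near r i t :=
  if_neg fun h => by have := h.2.1; omega

theorem copPos_eq_home {J i t : ℕ} (hJ : firstCapture D near k r = J) (h₁ : t ≤ 3 * i)
    (h₂ : t ≤ revealTime near r J) :
    copPos D near k v₀ r i t = v₀ := by
  subst hJ
  induction t with
  | zero => rfl
  | succ t ih =>
    have hsq : ¬ InSquad D near k r i t := fun h => by have := h.2.2; omega
    rw [copPos_succ, order, if_neg hsq, actorOrder, if_pos (by omega), ih (by omega) (by omega)]
    rfl

variable (D near k v₀) in
def Evades (r : ℕ → V) : Prop := ∀ t, ∀ i < k, ¬ ReflGen D (copPos D near k v₀ r i t) (r t)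

/-- The cop of a near stage stands next to the robber after one move, so the robber must
step to an out-neighbour. -/
theorem near_stage_robber_moves (hR : Routes D near v₀) (hr : ∀ t, ReflGen D (r t) (r (t + 1)))
    (hfree : Evades D near k v₀ r) {J i : ℕ} (hJ : firstCapture D near k r = J) (hi : i ≤ J)
    (hik : i < k) (hnear : near (r (3 * i))) :
    D (r (3 * i)) (r (3 * i + 1)) ∧
      ReachWithin D 2 (copPos D near k v₀ r i (3 * i + 1)) (r (3 * i + 1)) := by
  have h₀ : copPos D near k v₀ r i (3 * i) = v₀ :=
    copPos_eq_home hJ le_rfl (by have := le_revealTime (near := near) (r := r) J; omega)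
  have hx : copPos D near k v₀ r i (3 * i + 1) = hop D 1 v₀ (r (3 * i)) := by
    rw [copPos_succ, order_of_le_firstCapture hJ hi, actorOrder, if_neg (by omega),
      if_pos ⟨hnear, rfl⟩, h₀, obey_some, show 3 * i + 2 - (3 * i + 1) = 1 by omega]
  set x := copPos D near k v₀ r i (3 * i + 1)
  have hxr : ReflGen D x (r (3 * i)) :=
    reachWithin_one.mp (hx ▸ reachWithin_hop (hR.reach_near _ hnear))
  have hvx : D v₀ x := by
    rcases (reflGen_iff _ _ _).mp (hx ▸ reflGen_hop (D := D) 1 v₀ (r (3 * i))) with h | h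
    · exact absurd (h ▸ hxr) (h₀ ▸ hfree (3 * i) i hik)
    · exact h
  have hmove : D (r (3 * i)) (r (3 * i + 1)) := by
    rcases (reflGen_iff _ _ _).mp (hr (3 * i)) with h | h
    · exact absurd (h ▸ hxr) (hfree (3 * i + 1) i hik)
    · exact h
  exact ⟨hmove, hR.reach_near_mid _ _ _ hnear hvx hmove⟩

theorem reachWithin_guardVertex (hR : Routes D near v₀) (hr : ∀ t, ReflGen D (r t) (r (t + 1)))
    (hfree : Evades D near k v₀ r) {J i : ℕ} (hJ : firstCapture D near k r = J) (hi : i ≤ J)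
    (hik : i < k) :
    ∀ t ≥ revealTime near r i,
      ReachWithin D (3 * i + 3 - t) (copPos D near k v₀ r i t) (guardVertex near r i) := by
  have := le_revealTime (near := near) (r := r) i
  refine reachWithin_of_obey (fun t ht => ?_) ?_
  · rw [copPos_succ, order_of_le_firstCapture hJ hi, actorOrder, if_neg (by omega),
      if_neg ?_]
    rintro ⟨hn, rfl⟩
    rw [revealTime, if_pos hn] at ht
    omega
  · by_cases hn : near (r (3 * i))
    · have hrev : revealTime near r i = 3 * i + 1 := if_pos hn
      rw [guardVertex, hrev, show 3 * i + 3 - (3 * i + 1) = 2 by omega]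
      exact (near_stage_robber_moves hR hr hfree hJ hi hik hn).2
    · have hrev : revealTime near r i = 3 * i := if_neg hn
      have := le_revealTime (near := near) (r := r) J
      rw [guardVertex, hrev, show 3 * i + 3 - 3 * i = 3 by omega,
        copPos_eq_home hJ le_rfl (by omega)]
      exact hR.reach_far _ hn

theorem robber_not_mem_guardedSet (hR : Routes D near v₀)
    (hr : ∀ t, ReflGen D (r t) (r (t + 1))) (hfree : Evades D near k v₀ r) {J : ℕ}
    (hJ : firstCapture D near k r = J) (hJk : J < k) {t : ℕ} (ht : 3 * J ≤ t) :
    r t ∉ guardedSet D near r J := by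
  simp only [guardedSet, mem_biUnion, mem_range, mem_closedNbhd, not_exists, not_and]
  intro j hj hw
  have := revealTime_le (near := near) (r := r) j
  have hpos := reachWithin_guardVertex hR hr hfree hJ hj.le (hj.trans hJk) t (by omega)
  rw [show 3 * j + 3 - t = 0 by omega] at hpos
  exact hfree t j (hj.trans hJk) (hpos ▸ hw)

theorem reachWithin_two_of_adj_guardVertex (hR : Routes D near v₀)
    (hr : ∀ t, ReflGen D (r t) (r (t + 1))) (hfree : Evades D near k v₀ r) {J : ℕ}
    (hJ : firstCapture D near k r = J) (hJk : J < k) {b : V}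
    (hb : D (guardVertex near r J) b) : ReachWithin D 2 v₀ b := by
  by_cases hn : near (r (3 * J))
  · rw [guardVertex, revealTime, if_pos hn] at hb
    exact hR.reach_near_out _ _ _ hn (near_stage_robber_moves hR hr hfree hJ le_rfl hJk hn).1 hb
  · rw [guardVertex, revealTime, if_neg hn] at hb
    exact hR.reach_far_out _ _ hn hb

theorem exists_squad_cop (hR : Routes D near v₀)
    (hr : ∀ t, ReflGen D (r t) (r (t + 1))) (hfree : Evades D near k v₀ r) {J : ℕ}
    (hJ : firstCapture D near k r = J) (hcap : IsCaptureStage D near k r J) (hJk : J < k)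
    {b : V} (hb : b ∈ (frontier D near r J).erase (guardVertex near r J)) :
    ∃ i < k, ∀ t ≥ revealTime near r J,
      ReachWithin D (revealTime near r J + 2 - t) (copPos D near k v₀ r i t) b := by
  obtain ⟨m, hm⟩ := List.mem_iff_getElem?.mp (mem_toList.mpr hb)
  have hmE : m < #((frontier D near r J).erase (guardVertex near r J)) := by
    rw [← length_toList]
    exact (List.getElem?_eq_some_iff.mp hm).1
  have hwB : guardVertex near r J ∈ frontier D near r J :=
    mem_sdiff.mpr ⟨mem_closedNbhd.mpr .refl,
      robber_not_mem_guardedSet hR hr hfree hJ hJk (le_revealTime J)⟩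
  have hcard := card_erase_add_one hwB
  have hcap' : #(frontier D near r J) + J ≤ k := hcap
  have := revealTime_le (near := near) (r := r) J
  refine ⟨J + 1 + m, by omega, reachWithin_of_obey (fun t ht => ?_) ?_⟩
  · rw [copPos_succ, order, if_pos (by rw [InSquad, hJ]; exact ⟨hcap, by omega, ht⟩),
      squadTarget, hJ, show J + 1 + m - J - 1 = m by omega, hm]
    rfl
  · rw [copPos_eq_home hJ (by omega) (by omega),
      show revealTime near r J + 2 - revealTime near r J = 2 by omega]
    obtain ⟨hbw, hbB⟩ := mem_erase.mp hb
    rcases (reflGen_iff _ _ _).mp (mem_closedNbhd.mp (mem_sdiff.mp hbB).1) with h | h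
    · exact absurd h hbw
    · exact reachWithin_two_of_adj_guardVertex hR hr hfree hJ hJk h

/-- The robber is trapped in the frontier of the first capture stage: the squad covers
every vertex of it other than the guard vertex, and two moves later the cop of the stage
covers the guard vertex too. -/
theorem not_evades (hR : Routes D near v₀)
    (hk : 2 * Fintype.card V < k * k + 3 * k) (hr : ∀ t, ReflGen D (r t) (r (t + 1))) :
    ¬ Evades D near k v₀ r := by
  intro hfree
  obtain ⟨j, hjk, hj⟩ := exists_isCaptureStage (D := D) (near := near) (r := r) hk
  obtain ⟨J, hJ⟩ : ∃ J, firstCapture D near k r = J := ⟨_, rfl⟩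
  have hJk : J < k := hJ ▸ (firstCapture_le hj).trans_lt hjk
  have hT := le_revealTime (near := near) (r := r) J
  have htrapped : ∀ n ≤ 2, r (revealTime near r J + n) = guardVertex near r J := by
    intro n hn
    induction n with
    | zero => rfl
    | succ n ih =>
      by_contra hne
      have hb : r (revealTime near r J + (n + 1)) ∈
          (frontier D near r J).erase (guardVertex near r J) :=
        mem_erase.mpr ⟨hne, mem_sdiff.mpr ⟨mem_closedNbhd.mpr (ih (by omega) ▸ hr _),
          robber_not_mem_guardedSet hR hr hfree hJ hJk (by omega)⟩⟩
      obtain ⟨i, hik, hi⟩ := exists_squad_cop hR hr hfree hJ (hJ ▸ hj.firstCapture) hJk hb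
      exact hfree _ i hik ((hi _ (by omega)).reflGen (by omega))
  have hactor := reachWithin_guardVertex hR hr hfree hJ le_rfl hJk (revealTime near r J + 2)
    (by omega)
  exact hfree _ J hJk (htrapped 2 le_rfl ▸ hactor.reflGen (by omega))

end Capture

theorem dirCopsCanWin_of_routes {V : Type*} [Fintype V] {D : V → V → Prop} {near : V → Prop}
    {v₀ : V} (hR : Routes D near v₀) {k : ℕ} (hk : 2 * Fintype.card V < k * k + 3 * k) :
    dirCopsCanWin D Set.univ D k :=
  dirCopsCanWin_of_causal v₀ (fun i r t => obey D (order D near k r i t) t)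
    (fun _ _ t a => reflGen_obey _ t a)
    (fun _ _ _ _ h => by rw [order_congr h])
    (fun r _ hr => by
      have := not_evades hR hk fun t => (reflGen_iff _ _ _).mpr (hr t)
      simp only [Evades, not_forall, not_not] at this
      obtain ⟨t, i, hik, h⟩ := this
      exact ⟨t, ⟨i, hik⟩, h⟩)

end DirCops

theorem dirCopNumber_le_sqrt_general
    {V : Type} [Fintype V] (D : V → V → Prop)
    (hdiam : dirDiamLE2 D ∨ (dirBipartite D ∧ dirDiamLE3 D)) :
    (dirCopNumber D Set.univ D : ℝ) ≤ Real.sqrt (2 * Fintype.card V) := by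
  rcases isEmpty_or_nonempty V with _ | ⟨⟨v₀⟩⟩
  · rw [Nat.eq_zero_of_le_zero (dirCopNumber_le (dirCopsCanWin_zero_of_isEmpty (D := D))),
      Nat.cast_zero]
    exact Real.sqrt_nonneg _
  set k := Nat.sqrt (2 * Fintype.card V)
  have hk : 2 * Fintype.card V < k * k + 3 * k := by
    have := Nat.lt_succ_sqrt (2 * Fintype.card V)
    have : 0 < k := Nat.sqrt_pos.mpr (by have := Fintype.card_pos_iff.mpr ⟨v₀⟩; omega)
    nlinarith
  have hwin : dirCopsCanWin D Set.univ D k := by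
    rcases hdiam with h | ⟨⟨f, hf⟩, h⟩
    · exact DirCops.dirCopsCanWin_of_routes (DirCops.Routes.of_dirDiamLE2 h v₀) hk
    · exact DirCops.dirCopsCanWin_of_routes (DirCops.Routes.of_bipartite hf h v₀) hk
  calc (dirCopNumber D Set.univ D : ℝ) ≤ k := by exact_mod_cast dirCopNumber_le hwin
    _ ≤ √(2 * Fintype.card V) := by exact_mod_cast Real.nat_sqrt_le_real_sqrt

/-- Theorem 7.2: Let `D` be a strongly connected digraph on `n` vertices which has
diameter at most 2 or is bipartite of diameter at most 3.  Then `c(D) ≤ √(2n)`. -/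
theorem dirCopNumber_le_sqrt
    {V : Type} [Fintype V] (D : V → V → Prop)
    (hconn : dirStronglyConnected D)
    (hdiam : dirDiamLE2 D ∨ (dirBipartite D ∧ dirDiamLE3 D)) :
    (dirCopNumber D Set.univ D : ℝ) ≤ Real.sqrt (2 * Fintype.card V) :=
  dirCopNumber_le_sqrt_general D hdiam
end
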